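/- arXiv:1703.08728 — 2 statements merged into one kernel-verified Lean document; each statement's English description precedes it below -/
import Mathlib

section
/- Let G be a simple connected graph with n vertices, m edges, minimum degree δ and spectral radius ϱ(G). Then ϱ(G) = (δ-1)/2 + sqrt(2m - nδ + (δ+1)²/4) if and only if G is either a regular graph or a bidegreed graph in which every vertex has degree either δ or n-1. -/
open SimpleGraph Matrix Polynomial Real

/-- The characteristic polynomial of the adjacency matrix of a finite simple graph. -/
noncomputable def adjCharpoly {V : Type*} [Fintype V] (G : SimpleGraph V) : Polynomial ℝ :=
  letI := Classical.decEq V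
  letI : DecidableRel G.Adj := Classical.decRel _
  ((G.adjMatrix ℝ).charpoly)

/-- The adjacency spectrum of a finite simple graph: the multiset of real roots of the
characteristic polynomial of its adjacency matrix (with multiplicity). -/
noncomputable def adjSpectrum {V : Type*} [Fintype V] (G : SimpleGraph V) : Multiset ℝ :=
  (adjCharpoly G).roots

/-- The Laplacian spectrum of a finite simple graph (with multiplicity). -/
noncomputable def lapSpectrum {V : Type*} [Fintype V] (G : SimpleGraph V) : Multiset ℝ :=
  letI := Classical.decEq V
  letI : DecidableRel G.Adj := Classical.decRel _
  ((G.lapMatrix ℝ).charpoly).roots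

/-- The adjacency spectral radius: the largest adjacency eigenvalue. -/
noncomputable def specRadius {V : Type*} [Fintype V] (G : SimpleGraph V) : ℝ :=
  sSup {x : ℝ | x ∈ adjSpectrum G}

/-- The join `G ∇ H` of two graphs: disjoint union plus all cross edges. -/
def graphJoin {α β : Type*} (G : SimpleGraph α) (H : SimpleGraph β) :
    SimpleGraph (α ⊕ β) where
  Adj x y :=
    match x, y with
    | Sum.inl a, Sum.inl b => G.Adj a b
    | Sum.inr a, Sum.inr b => H.Adj a b
    | Sum.inl _, Sum.inr _ => True
    | Sum.inr _, Sum.inl _ => True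
  symm := by
    constructor
    rintro (a | a) (b | b) h
    · exact G.adj_symm h
    · trivial
    · trivial
    · exact H.adj_symm h
  loopless := by
    constructor
    rintro (a | a) h
    · exact G.irrefl h
    · exact H.irrefl h

/-- `m` disjoint copies of the cycle `Cₙ`. -/
def mCycles (m n : ℕ) : SimpleGraph (Fin m × Fin n) where
  Adj x y := x.1 = y.1 ∧ (cycleGraph n).Adj x.2 y.2
  symm := by constructor; rintro ⟨i, a⟩ ⟨j, b⟩ ⟨h1, h2⟩; exact ⟨h1.symm, h2.symm⟩
  loopless := by constructor; rintro ⟨i, a⟩ ⟨_, h⟩; exact (cycleGraph n).irrefl h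

/-- The multicone graph `K_w ∇ m·Cₙ`. -/
def multicone (w m n : ℕ) : SimpleGraph (Fin w ⊕ (Fin m × Fin n)) :=
  graphJoin (completeGraph (Fin w)) (mCycles m n)

/-!
Let `x ≥ 0` be an eigenvector of `ϱ`, `S = ∑ x`, and `u` a vertex where `x` is largest. Since
the neighbours of `u` are among the other vertices, `(ϱ + 1) x_u ≤ S`; and
`(ϱ - δ) S = ∑ (d_v - δ) x_v ≤ (2m - nδ) x_u`. Hence `(ϱ + 1)(ϱ - δ) ≤ 2m - nδ`, so `ϱ` is at
most the larger root of this quadratic. For a connected graph `x > 0`, and in the equality case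
every vertex with `d_v > δ` has `x_v = x_u`, so the first inequality is sharp at `v`, which forces
`v` to be adjacent to all other vertices. Conversely, on graphs whose degrees are `δ` or `n - 1`
a vector with two values is an eigenvector for the bound.
-/

theorem add_one_mul_sub_le_iff {a c t : ℝ} (ht : (a - 1) / 2 ≤ t)
    (hc : 0 ≤ c + (a + 1) ^ 2 / 4) :
    (t + 1) * (t - a) ≤ c ↔ t ≤ (a - 1) / 2 + √(c + (a + 1) ^ 2 / 4) := by
  have key : (t - (a - 1) / 2) ^ 2 = (t + 1) * (t - a) + (a + 1) ^ 2 / 4 := by ring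
  rw [← sub_le_iff_le_add', Real.le_sqrt (sub_nonneg.2 ht) hc, key]
  constructor <;> intro h <;> linarith

theorem add_one_mul_sub_eq_iff {a c t : ℝ} (ht : (a - 1) / 2 ≤ t)
    (hc : 0 ≤ c + (a + 1) ^ 2 / 4) :
    (t + 1) * (t - a) = c ↔ t = (a - 1) / 2 + √(c + (a + 1) ^ 2 / 4) := by
  have key : (t - (a - 1) / 2) ^ 2 = (t + 1) * (t - a) + (a + 1) ^ 2 / 4 := by ring
  rw [← sub_eq_iff_eq_add', eq_comm (a := t - _), Real.sqrt_eq_iff_eq_sq hc (sub_nonneg.2 ht),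
    key]
  constructor <;> intro h <;> linarith

theorem Matrix.dotProduct_mulVec_le_abs {ι R : Type*} [Fintype ι] [Ring R] [LinearOrder R]
    [IsStrictOrderedRing R] {M : Matrix ι ι R} (hM : ∀ i j, 0 ≤ M i j) (x : ι → R) :
    x ⬝ᵥ M *ᵥ x ≤ |x| ⬝ᵥ M *ᵥ |x| := by
  simp only [dotProduct, mulVec, Finset.mul_sum]
  refine Finset.sum_le_sum fun i _ => Finset.sum_le_sum fun j _ => ?_
  calc x i * (M i j * x j) ≤ |x i * (M i j * x j)| := le_abs_self _
    _ = |x i| * (M i j * |x j|) := by simp [abs_mul, abs_of_nonneg (hM i j)]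

namespace SimpleGraph

open Finset

variable {V : Type*} [Fintype V] (G : SimpleGraph V) [DecidableRel G.Adj]

section Spectrum

variable [DecidableEq V]

theorem adjCharpoly_eq : adjCharpoly G = (G.adjMatrix ℝ).charpoly := by
  unfold adjCharpoly
  congr!

theorem mem_adjSpectrum_iff {μ : ℝ} :
    μ ∈ adjSpectrum G ↔ μ ∈ spectrum ℝ (G.adjMatrix ℝ) := by
  rw [adjSpectrum, adjCharpoly_eq, (G.isHermitian_adjMatrix ℝ).roots_charpoly_eq_eigenvalues,
    (G.isHermitian_adjMatrix ℝ).spectrum_real_eq_range_eigenvalues]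
  simp

theorem specRadius_eq_sSup_spectrum : specRadius G = sSup (spectrum ℝ (G.adjMatrix ℝ)) := by
  simp only [specRadius, mem_adjSpectrum_iff, Set.ofPred_mem_eq]

theorem le_specRadius {μ : ℝ} (h : μ ∈ spectrum ℝ (G.adjMatrix ℝ)) :
    μ ≤ specRadius G := by
  rw [specRadius_eq_sSup_spectrum]
  exact le_csSup Matrix.finite_real_spectrum.bddAbove h

theorem specRadius_mem_spectrum [Nonempty V] : specRadius G ∈ spectrum ℝ (G.adjMatrix ℝ) := by
  rw [specRadius_eq_sSup_spectrum]
  refine Set.Nonempty.csSup_mem ?_ Matrix.finite_real_spectrum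
  rw [(G.isHermitian_adjMatrix ℝ).spectrum_real_eq_range_eigenvalues]
  exact Set.range_nonempty _

theorem posSemidef_specRadius_smul_one_sub : (specRadius G • 1 - G.adjMatrix ℝ).PosSemidef := by
  refine Matrix.posSemidef_iff_isHermitian_and_spectrum_nonneg.2
    ⟨(Matrix.isHermitian_one.smul (.all _)).sub (G.isHermitian_adjMatrix ℝ), ?_⟩
  rw [← Algebra.algebraMap_eq_smul_one, ← spectrum.singleton_sub_eq]
  rintro _ ⟨_, rfl, μ, hμ, rfl⟩
  simpa using G.le_specRadius hμ

theorem mem_spectrum_of_mulVec_eq {μ : ℝ} {x : V → ℝ} (hx0 : x ≠ 0)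
    (hx : G.adjMatrix ℝ *ᵥ x = μ • x) : μ ∈ spectrum ℝ (G.adjMatrix ℝ) := by
  rw [← Matrix.spectrum_toLin', ← Module.End.hasEigenvalue_iff_mem_spectrum]
  exact Module.End.hasEigenvalue_of_hasEigenvector ⟨by simpa using hx, hx0⟩

theorem exists_mulVec_eq_of_mem_spectrum {μ : ℝ} (h : μ ∈ spectrum ℝ (G.adjMatrix ℝ)) :
    ∃ x : V → ℝ, x ≠ 0 ∧ G.adjMatrix ℝ *ᵥ x = μ • x := by
  rw [← Matrix.spectrum_toLin', ← Module.End.hasEigenvalue_iff_mem_spectrum] at h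
  obtain ⟨x, hx, hx0⟩ := h.exists_hasEigenvector
  exact ⟨x, hx0, by simpa using hx⟩

/- For an eigenvector `x` of `ϱ`, `|x|` has Rayleigh quotient at least `ϱ`, so it lies in the
kernel of the positive semidefinite matrix `ϱ • 1 - A`. -/
theorem exists_nonneg_mulVec_eq_specRadius_smul [Nonempty V] :
    ∃ x : V → ℝ, x ≠ 0 ∧ 0 ≤ x ∧ G.adjMatrix ℝ *ᵥ x = specRadius G • x := by
  obtain ⟨x, hx0, hx⟩ := G.exists_mulVec_eq_of_mem_spectrum G.specRadius_mem_spectrum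
  have hpsd := G.posSemidef_specRadius_smul_one_sub
  refine ⟨|x|, by simpa using hx0, abs_nonneg x, ?_⟩
  have hquad : |x| ⬝ᵥ (specRadius G • 1 - G.adjMatrix ℝ) *ᵥ |x| ≤ 0 := by
    have hle := Matrix.dotProduct_mulVec_le_abs (M := G.adjMatrix ℝ) (fun i j => by
      rw [adjMatrix_apply]; exact ite_nonneg zero_le_one le_rfl) x
    have habs : |x| ⬝ᵥ |x| = x ⬝ᵥ x := by simp [dotProduct, abs_mul_abs_self]
    rw [hx] at hle
    simp only [Matrix.sub_mulVec, Matrix.smul_mulVec, Matrix.one_mulVec, dotProduct_sub,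
      dotProduct_smul, habs, smul_eq_mul] at hle ⊢
    linarith
  have hzero := (hpsd.dotProduct_mulVec_zero_iff |x|).1
    (le_antisymm (by simpa using hquad) (hpsd.dotProduct_mulVec_nonneg _))
  rw [Matrix.sub_mulVec, Matrix.smul_mulVec, Matrix.one_mulVec, sub_eq_zero] at hzero
  exact hzero.symm

end Spectrum

section Eigenvector

variable {μ : ℝ} {x : V → ℝ}

theorem sum_neighborFinset_eq_of_mulVec_eq (hx : G.adjMatrix ℝ *ᵥ x = μ • x) (v : V) :
    ∑ w ∈ G.neighborFinset v, x w = μ * x v := by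
  simpa [adjMatrix_mulVec_apply] using congrFun hx v

theorem pos_of_mulVec_eq_of_connected (hG : G.Connected) (hx0 : x ≠ 0) (hnn : 0 ≤ x)
    (hx : G.adjMatrix ℝ *ᵥ x = μ • x) (v : V) : 0 < x v := by
  obtain ⟨u, hu⟩ : ∃ u, 0 < x u := by
    obtain ⟨u, hu⟩ := Function.ne_iff.1 hx0
    exact ⟨u, (hnn u).lt_of_ne' hu⟩
  have hstep : ∀ a b, G.Adj a b → 0 < x a → 0 < x b := fun a b hab ha => by
    have : 0 < μ * x b := by
      rw [← G.sum_neighborFinset_eq_of_mulVec_eq hx]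
      exact sum_pos' (fun w _ => hnn w) ⟨a, (G.mem_neighborFinset b a).2 hab.symm, ha⟩
    exact (hnn b).lt_of_ne' (by rintro h; simp [h] at this)
  obtain ⟨p⟩ := hG.preconnected u v
  induction p with
  | nil => exact hu
  | cons hab _ ih => exact ih (hstep _ _ hab hu)

theorem sum_degree_mul_eq_of_mulVec_eq (hx : G.adjMatrix ℝ *ᵥ x = μ • x) :
    ∑ v, (G.degree v : ℝ) * x v = μ * ∑ v, x v := by
  calc ∑ v, (G.degree v : ℝ) * x v = (1 ᵥ* G.adjMatrix ℝ) ⬝ᵥ x := by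
        simp [dotProduct, adjMatrix_vecMul_apply]
    _ = μ * ∑ v, x v := by
        rw [← Matrix.dotProduct_mulVec, hx]
        simp [dotProduct, mul_sum]

theorem sum_eq_add_one_mul_add_compl [DecidableEq V] (hx : G.adjMatrix ℝ *ᵥ x = μ • x)
    (v : V) :
    ∑ w, x w = (μ + 1) * x v + (Gᶜ.adjMatrix ℝ *ᵥ x) v := by
  have hall : (Matrix.of 1 *ᵥ x) v = ∑ w, x w := by simp [Matrix.mulVec, dotProduct]
  rw [← hall, ← G.one_add_adjMatrix_add_compl_adjMatrix_eq_of_one ℝ,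
    compl_adjMatrix_eq_adjMatrix_compl, Matrix.add_mulVec, Matrix.add_mulVec, Matrix.one_mulVec, hx]
  simp only [Pi.add_apply, Pi.smul_apply, smul_eq_mul]
  ring

theorem degree_eq_zero_of_adjMatrix_mulVec_eq_zero (hpos : ∀ w, 0 < x w) {v : V}
    (h : (G.adjMatrix ℝ *ᵥ x) v = 0) : G.degree v = 0 := by
  rw [adjMatrix_mulVec_apply] at h
  by_contra hdeg
  rw [← card_neighborFinset_eq_degree, ← Ne, card_ne_zero] at hdeg
  exact (sum_pos (fun w _ => hpos w) hdeg).ne' h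

theorem isUniversal_of_sum_eq [DecidableEq V] (hpos : ∀ w, 0 < x w)
    (hx : G.adjMatrix ℝ *ᵥ x = μ • x) {v : V} (h : ∑ w, x w = (μ + 1) * x v) :
    G.IsUniversal v := by
  rw [G.sum_eq_add_one_mul_add_compl hx v, add_eq_left] at h
  have hcompl := Gᶜ.degree_eq_zero_of_adjMatrix_mulVec_eq_zero hpos h
  rw [degree_compl] at hcompl
  rw [← degree_eq_card_sub_one]
  have := G.degree_lt_card_verts v
  omega

end Eigenvector

section MinDegree

variable {μ : ℝ} {x : V → ℝ}

theorem sum_degree_sub_minDegree :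
    ∑ v, ((G.degree v : ℝ) - G.minDegree) =
      2 * #G.edgeFinset - Fintype.card V * G.minDegree := by
  rw [sum_sub_distrib, ← Nat.cast_sum, sum_degrees_eq_twice_card_edges]
  simp

theorem degree_sub_minDegree_nonneg (v : V) : 0 ≤ (G.degree v : ℝ) - G.minDegree :=
  sub_nonneg.2 (Nat.cast_le.2 (G.minDegree_le_degree v))

theorem two_mul_card_edgeFinset_sub_nonneg :
    0 ≤ (2 * #G.edgeFinset - Fintype.card V * G.minDegree : ℝ) := by
  rw [← sum_degree_sub_minDegree]
  exact sum_nonneg fun v _ => G.degree_sub_minDegree_nonneg v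

theorem isRegularOfDegree_minDegree_of_eq
    (h : (2 * #G.edgeFinset - Fintype.card V * G.minDegree : ℝ) = 0) :
    G.IsRegularOfDegree G.minDegree := fun v => by
  rw [← sum_degree_sub_minDegree, sum_eq_zero_iff_of_nonneg fun v _ =>
    G.degree_sub_minDegree_nonneg v] at h
  exact_mod_cast sub_eq_zero.1 (h v (mem_univ v))

theorem two_mul_card_edgeFinset_sub_eq [DecidablePred G.IsUniversal]
    (hP : ∀ v, G.degree v = G.minDegree ∨ G.IsUniversal v) :
    (2 * #G.edgeFinset - Fintype.card V * G.minDegree : ℝ) =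
      #{w | G.IsUniversal w} * (((Fintype.card V - 1 : ℕ) : ℝ) - G.minDegree) := by
  rw [← sum_degree_sub_minDegree, card_filter, Nat.cast_sum, sum_mul]
  refine sum_congr rfl fun v _ => ?_
  by_cases hv : G.IsUniversal v
  · simp [hv, (G.degree_eq_card_sub_one v).2 hv]
  · simp [hv, (hP v).resolve_right hv]

theorem sub_minDegree_mul_sum_eq (hx : G.adjMatrix ℝ *ᵥ x = μ • x) :
    (μ - G.minDegree) * ∑ v, x v = ∑ v, ((G.degree v : ℝ) - G.minDegree) * x v := by
  simp only [sub_mul, sum_sub_distrib, G.sum_degree_mul_eq_of_mulVec_eq hx, mul_sum]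

theorem minDegree_le_of_mulVec_eq (hx0 : x ≠ 0) (hnn : 0 ≤ x)
    (hx : G.adjMatrix ℝ *ᵥ x = μ • x) : (G.minDegree : ℝ) ≤ μ := by
  obtain ⟨u, hu⟩ := Function.ne_iff.1 hx0
  have hsum : 0 < ∑ v, x v :=
    sum_pos' (fun v _ => hnn v) ⟨u, mem_univ u, (hnn u).lt_of_ne' hu⟩
  have : 0 ≤ (μ - G.minDegree) * ∑ v, x v := by
    rw [G.sub_minDegree_mul_sum_eq hx]
    exact sum_nonneg fun v _ => mul_nonneg (G.degree_sub_minDegree_nonneg v) (hnn v)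
  exact sub_nonneg.1 (nonneg_of_mul_nonneg_left this hsum)

theorem sub_minDegree_mul_sum_le (hx : G.adjMatrix ℝ *ᵥ x = μ • x) {u : V}
    (hmax : ∀ v, x v ≤ x u) :
    (μ - G.minDegree) * ∑ v, x v ≤
      (2 * #G.edgeFinset - Fintype.card V * G.minDegree) * x u := by
  rw [G.sub_minDegree_mul_sum_eq hx, ← sum_degree_sub_minDegree, sum_mul]
  exact sum_le_sum fun v _ => mul_le_mul_of_nonneg_left (hmax v) (G.degree_sub_minDegree_nonneg v)

theorem add_one_mul_le_sum [DecidableEq V] (hnn : 0 ≤ x) (hx : G.adjMatrix ℝ *ᵥ x = μ • x)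
    (v : V) : (μ + 1) * x v ≤ ∑ w, x w := by
  rw [G.sum_eq_add_one_mul_add_compl hx v, le_add_iff_nonneg_right, adjMatrix_mulVec_apply]
  exact sum_nonneg fun w _ => hnn w

theorem add_one_mul_sub_minDegree_le_of_mulVec_eq (hx0 : x ≠ 0) (hnn : 0 ≤ x)
    (hx : G.adjMatrix ℝ *ᵥ x = μ • x) :
    (μ + 1) * (μ - G.minDegree) ≤ 2 * #G.edgeFinset - Fintype.card V * G.minDegree := by
  classical
  obtain ⟨w, hw⟩ := Function.ne_iff.1 hx0
  obtain ⟨u, -, hmax⟩ := exists_max_image univ x ⟨w, mem_univ w⟩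
  have hu : 0 < x u := ((hnn w).lt_of_ne' hw).trans_le (hmax w (mem_univ w))
  have hδ := sub_nonneg.2 (G.minDegree_le_of_mulVec_eq hx0 hnn hx)
  refine le_of_mul_le_mul_right ?_ hu
  calc (μ + 1) * (μ - G.minDegree) * x u = (μ - G.minDegree) * ((μ + 1) * x u) := by ring
    _ ≤ (μ - G.minDegree) * ∑ v, x v :=
      mul_le_mul_of_nonneg_left (G.add_one_mul_le_sum hnn hx u) hδ
    _ ≤ _ := G.sub_minDegree_mul_sum_le hx fun v => hmax v (mem_univ v)

theorem degree_eq_minDegree_or_eq_of_eq (hx : G.adjMatrix ℝ *ᵥ x = μ • x) {u : V}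
    (hmax : ∀ v, x v ≤ x u)
    (h : (μ - G.minDegree) * ∑ v, x v = (2 * #G.edgeFinset - Fintype.card V * G.minDegree) * x u)
    (v : V) : G.degree v = G.minDegree ∨ x v = x u := by
  have hterm : ∀ v ∈ univ, 0 ≤ ((G.degree v : ℝ) - G.minDegree) * (x u - x v) :=
    fun v _ => mul_nonneg (G.degree_sub_minDegree_nonneg v) (sub_nonneg.2 (hmax v))
  have hzero : ∑ v, ((G.degree v : ℝ) - G.minDegree) * (x u - x v) = 0 := by
    rw [← sum_degree_sub_minDegree, G.sub_minDegree_mul_sum_eq hx, sum_mul] at h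
    simp only [mul_sub, sum_sub_distrib, h, sub_self]
  rcases mul_eq_zero.1 ((sum_eq_zero_iff_of_nonneg hterm).1 hzero v (mem_univ v)) with h | h
  · exact Or.inl (by exact_mod_cast sub_eq_zero.1 h)
  · exact Or.inr (sub_eq_zero.1 h).symm

theorem degree_eq_minDegree_or_isUniversal_of_eq (hpos : ∀ v, 0 < x v)
    (hx : G.adjMatrix ℝ *ᵥ x = μ • x)
    (heq : (μ + 1) * (μ - G.minDegree) = 2 * #G.edgeFinset - Fintype.card V * G.minDegree)
    (v : V) : G.degree v = G.minDegree ∨ G.IsUniversal v := by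
  classical
  have hnn : 0 ≤ x := fun w => (hpos w).le
  have hδ := G.minDegree_le_of_mulVec_eq (fun h => (hpos v).ne' (by simp [h])) hnn hx
  rcases hδ.eq_or_lt with hμ | hμ
  · rw [← hμ, sub_self, mul_zero, eq_comm] at heq
    exact Or.inl (G.isRegularOfDegree_minDegree_of_eq heq v)
  obtain ⟨u, -, hmax⟩ := exists_max_image univ x ⟨v, mem_univ v⟩
  replace hmax : ∀ w, x w ≤ x u := fun w => hmax w (mem_univ w)
  have hsum : ∑ w, x w = (μ + 1) * x u := by
    refine le_antisymm (le_of_mul_le_mul_left ?_ (sub_pos.2 hμ)) (G.add_one_mul_le_sum hnn hx u)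
    calc _ ≤ _ := G.sub_minDegree_mul_sum_le hx hmax
      _ = _ := by rw [← heq]; ring
  have hsum' : (μ - G.minDegree) * ∑ w, x w =
      (2 * #G.edgeFinset - Fintype.card V * G.minDegree) * x u := by
    rw [hsum, ← heq]; ring
  refine (G.degree_eq_minDegree_or_eq_of_eq hx hmax hsum' v).imp_right fun hv => ?_
  exact G.isUniversal_of_sum_eq hpos hx (by rw [hsum, hv])

end MinDegree

section Bound

/-- The larger root of `(t + 1) (t - δ) = 2m - nδ`. -/
noncomputable def hongShuFangBound : ℝ :=
  ((G.minDegree : ℝ) - 1) / 2 +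
    √(2 * #G.edgeFinset - Fintype.card V * G.minDegree + ((G.minDegree : ℝ) + 1) ^ 2 / 4)

theorem add_one_mul_sub_minDegree_le_iff {t : ℝ} (ht : (G.minDegree : ℝ) ≤ t) :
    (t + 1) * (t - G.minDegree) ≤ 2 * #G.edgeFinset - Fintype.card V * G.minDegree ↔
      t ≤ G.hongShuFangBound :=
  add_one_mul_sub_le_iff (by linarith)
    (by have := G.two_mul_card_edgeFinset_sub_nonneg; positivity)

theorem add_one_mul_sub_minDegree_eq_iff {t : ℝ} (ht : (G.minDegree : ℝ) ≤ t) :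
    (t + 1) * (t - G.minDegree) = 2 * #G.edgeFinset - Fintype.card V * G.minDegree ↔
      t = G.hongShuFangBound :=
  add_one_mul_sub_eq_iff (by linarith)
    (by have := G.two_mul_card_edgeFinset_sub_nonneg; positivity)

theorem minDegree_le_hongShuFangBound : (G.minDegree : ℝ) ≤ G.hongShuFangBound :=
  (G.add_one_mul_sub_minDegree_le_iff le_rfl).1
    (by simpa using G.two_mul_card_edgeFinset_sub_nonneg)

theorem filter_isUniversal_neighborFinset [DecidableEq V] [DecidablePred G.IsUniversal] (v : V) :
    {w ∈ G.neighborFinset v | G.IsUniversal w} = ({w | G.IsUniversal w} : Finset V).erase v := by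
  ext w
  simp only [mem_filter, mem_neighborFinset, mem_erase, mem_univ, true_and]
  exact ⟨fun ⟨hvw, hw⟩ => ⟨hvw.ne', hw⟩, fun ⟨hwv, hw⟩ => ⟨(hw hwv).symm, hw⟩⟩

/- With `s` universal vertices, the eigenvector is `1` off them and `1 + (R - δ) / s` on them;
when `s = 0` the graph is `δ`-regular and `R = δ`, so the junk value `(R - δ) / 0 = 0` is
harmless. -/
theorem hongShuFangBound_mem_spectrum [DecidableEq V] [Nonempty V]
    (hP : ∀ v, G.degree v = G.minDegree ∨ G.IsUniversal v) :
    G.hongShuFangBound ∈ spectrum ℝ (G.adjMatrix ℝ) := by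
  classical
  have hR := (G.add_one_mul_sub_minDegree_eq_iff G.minDegree_le_hongShuFangBound).2 rfl
  rw [G.two_mul_card_edgeFinset_sub_eq hP] at hR
  set R := G.hongShuFangBound
  set δ : ℝ := (G.minDegree : ℝ)
  set s : ℝ := ((#{w | G.IsUniversal w} : ℕ) : ℝ)
  set D : ℝ := ((Fintype.card V - 1 : ℕ) : ℝ)
  have hRδ : s * ((R - δ) / s) = R - δ := by
    rcases eq_or_ne s 0 with hs | hs
    · have : R + 1 ≠ 0 := by
        linarith [G.minDegree_le_hongShuFangBound, Nat.cast_nonneg (α := ℝ) G.minDegree]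
      rw [hs, zero_mul] at hR ⊢
      exact ((mul_eq_zero.1 hR).resolve_left this).symm
    · field_simp
  set k := (R - δ) / s
  have hk : 0 ≤ k := div_nonneg (sub_nonneg.2 G.minDegree_le_hongShuFangBound) (Nat.cast_nonneg _)
  set y : V → ℝ := fun w => 1 + if G.IsUniversal w then k else 0
  have hy0 : y ≠ 0 := fun h => by
    have := congrFun h (Classical.arbitrary V)
    simp only [y, Pi.zero_apply] at this
    split_ifs at this <;> linarith
  refine G.mem_spectrum_of_mulVec_eq hy0 (funext fun v => ?_)
  rw [adjMatrix_mulVec_apply, Pi.smul_apply, smul_eq_mul, sum_add_distrib, sum_ite,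
    sum_const_zero, add_zero, sum_const, sum_const, filter_isUniversal_neighborFinset,
    card_neighborFinset_eq_degree]
  simp only [nsmul_eq_mul, mul_one, y]
  by_cases hv : G.IsUniversal v
  · have hs : s ≠ 0 := by simpa [s] using ⟨v, hv⟩
    have hRk : (R + 1) * k = D - δ :=
      mul_left_cancel₀ hs (by linear_combination (R + 1) * hRδ + hR)
    rw [card_erase_of_mem (by simpa using hv),
      Nat.cast_pred (card_pos.2 ⟨v, by simpa using hv⟩), if_pos hv,
      (G.degree_eq_card_sub_one v).2 hv]
    linear_combination hRδ - hRk
  · rw [erase_eq_of_notMem (by simpa using hv), if_neg hv, (hP v).resolve_right hv]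
    linear_combination hRδ

end Bound

theorem regular_or_bidegreed_iff [Nonempty V] :
    ((∃ d, G.IsRegularOfDegree d) ∨
        ((Finset.image (fun v : V => G.degree v) Finset.univ).card = 2 ∧
          ∀ v : V, G.degree v = G.minDegree ∨ G.degree v = Fintype.card V - 1)) ↔
      ∀ v, G.degree v = G.minDegree ∨ G.IsUniversal v := by
  simp only [degree_eq_card_sub_one]
  constructor
  · rintro (⟨d, hd⟩ | ⟨-, h⟩)
    · exact fun v => Or.inl (by rw [hd v, hd.minDegree_eq])
    · exact h
  intro h
  by_cases hreg : ∀ v, G.degree v = G.minDegree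
  · exact Or.inl ⟨_, hreg⟩
  push Not at hreg
  obtain ⟨v, hv⟩ := hreg
  have hvU := (h v).resolve_left hv
  refine Or.inr ⟨?_, h⟩
  have himage : image (fun v : V => G.degree v) univ = {G.minDegree, Fintype.card V - 1} := by
    ext d
    simp only [mem_image, mem_univ, true_and, mem_insert, mem_singleton]
    constructor
    · rintro ⟨w, rfl⟩
      exact (h w).imp_right (G.degree_eq_card_sub_one w).2
    · rintro (rfl | rfl)
      · exact G.exists_minimal_degree_vertex.imp fun w hw => hw.symm
      · exact ⟨v, (G.degree_eq_card_sub_one v).2 hvU⟩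
  rw [himage]
  exact card_pair (by rw [← (G.degree_eq_card_sub_one v).2 hvU]; exact hv.symm)

end SimpleGraph

theorem specRadius_eq_iff_general {V : Type*} [Fintype V]
    (G : SimpleGraph V) [DecidableRel G.Adj] (hG : G.Connected) :
    specRadius G = ((G.minDegree : ℝ) - 1) / 2 +
        Real.sqrt (2 * G.edgeFinset.card - Fintype.card V * G.minDegree +
          ((G.minDegree : ℝ) + 1) ^ 2 / 4) ↔
      (∃ d, G.IsRegularOfDegree d) ∨
        ((Finset.image (fun v : V => G.degree v) Finset.univ).card = 2 ∧
          ∀ v : V, G.degree v = G.minDegree ∨ G.degree v = Fintype.card V - 1) := by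
  classical
  have := hG.nonempty
  obtain ⟨x, hx0, hnn, hx⟩ := G.exists_nonneg_mulVec_eq_specRadius_smul
  have hδ := G.minDegree_le_of_mulVec_eq hx0 hnn hx
  rw [G.regular_or_bidegreed_iff]
  change specRadius G = G.hongShuFangBound ↔ _
  constructor
  · intro h
    exact G.degree_eq_minDegree_or_isUniversal_of_eq (G.pos_of_mulVec_eq_of_connected hG hx0 hnn hx)
      hx ((G.add_one_mul_sub_minDegree_eq_iff hδ).2 h)
  · intro hP
    exact le_antisymm
      ((G.add_one_mul_sub_minDegree_le_iff hδ).1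
        (G.add_one_mul_sub_minDegree_le_of_mulVec_eq hx0 hnn hx))
      (G.le_specRadius (G.hongShuFangBound_mem_spectrum hP))

/-- For a connected graph `G`, equality `ϱ(G) = (δ-1)/2 + √(2m - nδ + (δ+1)²/4)` holds iff
`G` is regular, or `G` is bidegreed with every vertex of degree `δ` or `n - 1`. -/
theorem specRadius_eq_iff {V : Type*} [Fintype V] [Nonempty V] [DecidableEq V]
    (G : SimpleGraph V) [DecidableRel G.Adj] (hG : G.Connected) :
    specRadius G = ((G.minDegree : ℝ) - 1) / 2 +
        Real.sqrt (2 * G.edgeFinset.card - Fintype.card V * G.minDegree +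
          ((G.minDegree : ℝ) + 1) ^ 2 / 4) ↔
      (∃ d, G.IsRegularOfDegree d) ∨
        ((Finset.image (fun v : V => G.degree v) Finset.univ).card = 2 ∧
          ∀ v : V, G.degree v = G.minDegree ∨ G.degree v = Fintype.card V - 1) :=
  specRadius_eq_iff_general G hG
end

section
/- A graph G on n vertices has n as one of its Laplacian eigenvalues if and only if G is the join of two (nonempty) graphs. -/
open SimpleGraph Matrix Polynomial Real

/-!
With `J` the all-ones matrix, `L(G) + L(Gᶜ) = n • 1 - J`. Every vector in the range of `L(G)`
sums to zero, so an eigenvector `x` of `L(G)` for `n` has `∑ x = 0` and then `L(Gᶜ) x = 0`: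
`x` is constant along the edges of `Gᶜ`, yet not constant. Its level set through any vertex is
then a nonempty proper set `s` with no edge of `Gᶜ` leaving it, i.e. `G` contains every edge
between `s` and `sᶜ`. Conversely, for such an `s` the vector equal to `|sᶜ|` on `s` and `-|s|`
on `sᶜ` is an eigenvector for `n`.
-/

open Finset

theorem Matrix.mem_roots_charpoly_iff {n K : Type*} [Fintype n] [DecidableEq n] [Field K]
    (M : Matrix n n K) (μ : K) : μ ∈ M.charpoly.roots ↔ ∃ x ≠ 0, M *ᵥ x = μ • x := by
  rw [mem_roots M.charpoly_monic.ne_zero, ← charpoly_toLin',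
    ← Module.End.hasEigenvalue_iff_isRoot_charpoly, Module.End.hasEigenvalue_iff,
    Submodule.ne_bot_iff]
  simp only [Module.End.mem_eigenspace_iff, toLin'_apply, and_comm]

namespace SimpleGraph

variable {V : Type*} [Fintype V] (G : SimpleGraph V)

theorem lapSpectrum_eq_roots_charpoly [DecidableEq V] [DecidableRel G.Adj] :
    lapSpectrum G = (G.lapMatrix ℝ).charpoly.roots := by
  unfold lapSpectrum
  congr!

variable {R : Type*}

theorem lapMatrix_mulVec_apply_eq_sum [DecidableEq V] [DecidableRel G.Adj] [Ring R]
    (v : V) (x : V → R) :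
    (G.lapMatrix R *ᵥ x) v = ∑ u ∈ G.neighborFinset v, (x v - x u) := by
  rw [lapMatrix_mulVec_apply, sum_sub_distrib, sum_const, card_neighborFinset_eq_degree,
    nsmul_eq_mul]

theorem sum_lapMatrix_mulVec [DecidableEq V] [DecidableRel G.Adj] [CommRing R] (x : V → R) :
    ∑ v, (G.lapMatrix R *ᵥ x) v = 0 := by
  have hconst : (fun _ ↦ (1 : R)) ᵥ* G.lapMatrix R = 0 := by
    rw [← (G.isSymm_lapMatrix R).eq, vecMul_transpose, lapMatrix_mulVec_const_eq_zero]
  simpa [dotProduct, hconst] using dotProduct_mulVec (fun _ ↦ (1 : R)) (G.lapMatrix R) x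

theorem lapMatrix_mulVec_add_lapMatrix_compl_mulVec [DecidableEq V] [DecidableRel G.Adj]
    [CommRing R] (x : V → R) (v : V) :
    (G.lapMatrix R *ᵥ x) v + (Gᶜ.lapMatrix R *ᵥ x) v = Fintype.card V * x v - ∑ u, x u := by
  have hsplit : G.neighborFinset v ∪ Gᶜ.neighborFinset v = {v}ᶜ := by
    ext u; by_cases h : u = v <;> simp [h]; tauto
  have hdisj : Disjoint (G.neighborFinset v) (Gᶜ.neighborFinset v) := by
    rw [neighborFinset_compl]; exact disjoint_compl_right.mono_right sdiff_subset
  calc (G.lapMatrix R *ᵥ x) v + (Gᶜ.lapMatrix R *ᵥ x) v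
      = ∑ u ∈ {v}ᶜ, (x v - x u) := by
        rw [lapMatrix_mulVec_apply_eq_sum, lapMatrix_mulVec_apply_eq_sum, ← sum_union hdisj,
          hsplit]
    _ = ∑ u, (x v - x u) := by rw [← sum_compl_add_sum {v}]; simp
    _ = Fintype.card V * x v - ∑ u, x u := by simp [sum_sub_distrib]

theorem lapMatrix_mulVec_eq_card_smul_iff [DecidableEq V] [DecidableRel G.Adj] [Field R]
    [CharZero R] (x : V → R) :
    G.lapMatrix R *ᵥ x = (Fintype.card V : R) • x ↔ ∑ v, x v = 0 ∧ Gᶜ.lapMatrix R *ᵥ x = 0 := by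
  have hadd := G.lapMatrix_mulVec_add_lapMatrix_compl_mulVec x
  constructor
  · intro hx
    have hsum : ∑ v, x v = 0 := by
      have h := G.sum_lapMatrix_mulVec x
      simp only [hx, Pi.smul_apply, smul_eq_mul, ← mul_sum, mul_eq_zero, Nat.cast_eq_zero] at h
      rcases h with hV | hsum
      · have : IsEmpty V := Fintype.card_eq_zero_iff.1 hV
        exact sum_of_isEmpty _
      · exact hsum
    refine ⟨hsum, funext fun v ↦ ?_⟩
    have h := hadd v
    rw [hx, hsum] at h
    simpa using h
  · rintro ⟨hsum, hcompl⟩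
    funext v
    have h := hadd v
    rw [hcompl, hsum] at h
    simpa using h

theorem exists_join_of_apply_ne [DecidableEq V] {α : Type*} {x : V → α} {a b : V}
    (hab : x a ≠ x b) (hx : ∀ u v, Gᶜ.Adj u v → x u = x v) :
    ∃ s : Finset V, s.Nonempty ∧ sᶜ.Nonempty ∧ ∀ u ∈ s, ∀ v ∈ sᶜ, G.Adj u v := by
  classical
  refine ⟨univ.filter (x · = x a), ⟨a, by simp⟩, ⟨b, by simpa [eq_comm] using hab⟩,
    fun u hu v hv ↦ ?_⟩
  simp only [mem_filter, mem_univ, true_and, mem_compl] at hu hv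
  have huv : u ≠ v := by rintro rfl; exact hv hu
  by_contra hnadj
  exact hv ((hx u v ((G.compl_adj u v).2 ⟨huv, hnadj⟩)).symm.trans hu)

theorem mem_iff_mem_of_compl_adj [DecidableEq V] {s : Finset V}
    (hs : ∀ u ∈ s, ∀ v ∈ sᶜ, G.Adj u v) {u v : V} (huv : Gᶜ.Adj u v) : u ∈ s ↔ v ∈ s := by
  have hnadj := ((G.compl_adj u v).1 huv).2
  constructor
  · intro hu
    by_contra hv
    exact hnadj (hs u hu v (mem_compl.2 hv))
  · intro hv
    by_contra hu
    exact hnadj (hs v hv u (mem_compl.2 hu)).symm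

end SimpleGraph

section

variable {V : Type*} [Fintype V]

theorem exists_apply_ne_of_sum_eq_zero {K : Type*} [Field K] [CharZero K] {x : V → K}
    (hx : x ≠ 0) (hsum : ∑ v, x v = 0) : ∃ u v, x u ≠ x v := by
  obtain ⟨u, hu⟩ := Function.ne_iff.1 hx
  by_contra! hconst
  have hcard : (Fintype.card V : K) ≠ 0 := Nat.cast_ne_zero.2 (Fintype.card_pos_iff.2 ⟨u⟩).ne'
  have hsum' : ∑ v, x v = Fintype.card V * x u := by simp [← hconst u]
  exact hu ((mul_eq_zero.1 (hsum' ▸ hsum)).resolve_left hcard)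

variable [DecidableEq V]

def cutVector (s : Finset V) : V → ℝ := fun v ↦ if v ∈ s then (#sᶜ : ℝ) else -(#s : ℝ)

theorem sum_cutVector (s : Finset V) : ∑ v, cutVector s v = 0 := by
  simp only [cutVector]
  rw [← sum_add_sum_compl s, sum_congr rfl fun v hv ↦ if_pos hv,
    sum_congr rfl fun v hv ↦ if_neg (mem_compl.1 hv)]
  simp only [sum_const, nsmul_eq_mul]
  ring

theorem cutVector_ne_zero {s : Finset V} (hs : s.Nonempty) (hsc : sᶜ.Nonempty) :
    cutVector s ≠ 0 := by
  obtain ⟨v, hv⟩ := hsc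
  intro h
  have hv0 : cutVector s v = 0 := congrFun h v
  simp only [cutVector, if_neg (mem_compl.1 hv), neg_eq_zero, Nat.cast_eq_zero,
    card_eq_zero] at hv0
  exact hs.ne_empty hv0

end

/-- A graph `G` on `n` vertices has `n` as a Laplacian eigenvalue iff `G` is the join of two
(nonempty) graphs. -/
theorem card_mem_lapSpectrum_iff_join {V : Type*} [Fintype V] [DecidableEq V]
    (G : SimpleGraph V) :
    (Fintype.card V : ℝ) ∈ lapSpectrum G ↔
      ∃ s : Finset V, s.Nonempty ∧ sᶜ.Nonempty ∧ ∀ u ∈ s, ∀ v ∈ sᶜ, G.Adj u v := by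
  classical
  simp_rw [G.lapSpectrum_eq_roots_charpoly, mem_roots_charpoly_iff,
    lapMatrix_mulVec_eq_card_smul_iff, lapMatrix_mulVec_eq_zero_iff_forall_adj]
  constructor
  · rintro ⟨x, hx0, hsum, hconst⟩
    obtain ⟨u, v, huv⟩ := exists_apply_ne_of_sum_eq_zero hx0 hsum
    exact G.exists_join_of_apply_ne huv hconst
  · rintro ⟨s, hs, hsc, hadj⟩
    refine ⟨cutVector s, cutVector_ne_zero hs hsc, sum_cutVector s, fun u v huv ↦ ?_⟩
    simp [cutVector, G.mem_iff_mem_of_compl_adj hadj huv]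
end
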